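/- In A_g (g ≥ 2, n ≥ 3), for distinct i, j ∈ {2,…,n}: x_1 x_j · (x_i y_j) = −x_1 x_i ω_j + ω_1 x_i x_j, and y_1 x_j · (x_i y_j) = −y_1 x_i ω_j + ω_1 x_i y_j. -/

import Mathlib

/-- Generators of the rational cohomology of the `n`-fold power of a genus-`g` surface:
`a i p`, `b i p` in degree 1 and `w i` (the class `ω_i`) in degree 2.  The indices are
`0`-based: `a i p` stands for the class `a_{i+1}(p+1)` of the paper. -/
inductive SurfGen (n g : ℕ) : Type
  | a (i : Fin n) (p : Fin g)
  | b (i : Fin n) (p : Fin g)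
  | w (i : Fin n)

/-- The cohomological degree of a generator. -/
def SurfGen.deg {n g : ℕ} : SurfGen n g → ℕ
  | .a _ _ => 1
  | .b _ _ => 1
  | .w _ => 2

open FreeAlgebra in
/-- The defining relations of `H^*(Σ_g^{×n}; ℚ)`: within each factor,
`a_i(p)a_i(q) = b_i(p)b_i(q) = 0`, `a_i(p)b_i(q) = δ_{pq} ω_i`, together with
graded (Koszul-signed) commutativity of the generators. -/
inductive SurfRel (n g : ℕ) :
    FreeAlgebra ℚ (SurfGen n g) → FreeAlgebra ℚ (SurfGen n g) → Prop
  | aa (i : Fin n) (p q : Fin g) :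
      SurfRel n g (ι ℚ (SurfGen.a i p) * ι ℚ (SurfGen.a i q)) 0
  | bb (i : Fin n) (p q : Fin g) :
      SurfRel n g (ι ℚ (SurfGen.b i p) * ι ℚ (SurfGen.b i q)) 0
  | ab_eq (i : Fin n) (p : Fin g) :
      SurfRel n g (ι ℚ (SurfGen.a i p) * ι ℚ (SurfGen.b i p)) (ι ℚ (SurfGen.w i))
  | ab_ne (i : Fin n) (p q : Fin g) : p ≠ q →
      SurfRel n g (ι ℚ (SurfGen.a i p) * ι ℚ (SurfGen.b i q)) 0
  | koszul (u v : SurfGen n g) :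
      SurfRel n g (ι ℚ u * ι ℚ v)
        (((-1 : ℚ) ^ (u.deg * v.deg)) • (ι ℚ v * ι ℚ u))

/-- `H^*(Σ_g^{×n}; ℚ)`, presented by generators and relations. -/
def SurfCoh (n g : ℕ) : Type := RingQuot (SurfRel n g)

noncomputable instance (n g : ℕ) : Ring (SurfCoh n g) :=
  inferInstanceAs (Ring (RingQuot (SurfRel n g)))

noncomputable instance (n g : ℕ) : Algebra ℚ (SurfCoh n g) :=
  inferInstanceAs (Algebra ℚ (RingQuot (SurfRel n g)))

/-- The class `a_{i+1}(p+1)`. -/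
noncomputable def gA {n g : ℕ} (i : Fin n) (p : Fin g) : SurfCoh n g :=
  RingQuot.mkAlgHom ℚ (SurfRel n g) (FreeAlgebra.ι ℚ (SurfGen.a i p))

/-- The class `b_{i+1}(p+1)`. -/
noncomputable def gB {n g : ℕ} (i : Fin n) (p : Fin g) : SurfCoh n g :=
  RingQuot.mkAlgHom ℚ (SurfRel n g) (FreeAlgebra.ι ℚ (SurfGen.b i p))

/-- The class `ω_{i+1}`. -/
noncomputable def gW {n g : ℕ} (i : Fin n) : SurfCoh n g :=
  RingQuot.mkAlgHom ℚ (SurfRel n g) (FreeAlgebra.ι ℚ (SurfGen.w i))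

/-- The class `x_{i+1}(p+1)`: equal to `a_{i+1}(p+1)` unless `p+1 = 1` and `i+1 ≥ 2`, in which
case it is `a_{i+1}(1) - a_1(1)`. -/
noncomputable def gX {n g : ℕ} [NeZero n] [NeZero g] (i : Fin n) (p : Fin g) : SurfCoh n g :=
  if p = 0 ∧ i ≠ 0 then gA i p - gA 0 p else gA i p

/-- The class `y_{i+1}(p+1)`: equal to `b_{i+1}(p+1)` unless `p+1 = 1` and `i+1 ≥ 2`, in which
case it is `b_{i+1}(1) - b_1(1)`. -/
noncomputable def gY {n g : ℕ} [NeZero n] [NeZero g] (i : Fin n) (p : Fin g) : SurfCoh n g :=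
  if p = 0 ∧ i ≠ 0 then gB i p - gB 0 p else gB i p

/-- The relations defining the quotient algebra `A_g`: all products
`x_i(p)x_j(q)`, `x_i(p)y_j(q)`, `y_i(p)y_j(q)` with `p, q ≥ 2` and `i ≠ j` are set to zero. -/
inductive ARel (n g : ℕ) [NeZero n] [NeZero g] : SurfCoh n g → SurfCoh n g → Prop
  | xx (i j : Fin n) (p q : Fin g) : i ≠ j → p ≠ 0 → q ≠ 0 → ARel n g (gX i p * gX j q) 0
  | xy (i j : Fin n) (p q : Fin g) : i ≠ j → p ≠ 0 → q ≠ 0 → ARel n g (gX i p * gY j q) 0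
  | yy (i j : Fin n) (p q : Fin g) : i ≠ j → p ≠ 0 → q ≠ 0 → ARel n g (gY i p * gY j q) 0

/-- The algebra `A_g`: the quotient of `H^*(Σ_g^{×n}; ℚ)` by the ideal generated by the
products `x_i(p)x_j(q)`, `x_i(p)y_j(q)`, `y_i(p)y_j(q)` with `p, q ≥ 2`, `i ≠ j`. -/
def SurfA (n g : ℕ) [NeZero n] [NeZero g] : Type := RingQuot (ARel n g)

noncomputable instance (n g : ℕ) [NeZero n] [NeZero g] : Ring (SurfA n g) :=
  inferInstanceAs (Ring (RingQuot (ARel n g)))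

noncomputable instance (n g : ℕ) [NeZero n] [NeZero g] : Algebra ℚ (SurfA n g) :=
  inferInstanceAs (Algebra ℚ (RingQuot (ARel n g)))

/-- The quotient map `H^*(Σ_g^{×n}; ℚ) → A_g`. -/
noncomputable def toA (n g : ℕ) [NeZero n] [NeZero g] : SurfCoh n g →ₐ[ℚ] SurfA n g :=
  RingQuot.mkAlgHom ℚ (ARel n g)

/-- The image of `x_{i+1} = x_{i+1}(1)` in `A_g`. -/
noncomputable def xA {n g : ℕ} [NeZero n] [NeZero g] (i : Fin n) : SurfA n g :=
  toA n g (gX i 0)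

/-- The image of `y_{i+1} = y_{i+1}(1)` in `A_g`. -/
noncomputable def yA {n g : ℕ} [NeZero n] [NeZero g] (i : Fin n) : SurfA n g :=
  toA n g (gY i 0)

/-- The image of `ω_{i+1}` in `A_g`. -/
noncomputable def wA {n g : ℕ} [NeZero n] [NeZero g] (i : Fin n) : SurfA n g :=
  toA n g (gW i)

/-! The two identities already hold in `H^*(Σ_g^{×n}; ℚ)`. Substituting `x_1 = a_1`,
`y_1 = b_1`, `x_k = a_k - a_1`, `y_k = b_k - b_1`, `ω_k = a_k b_k` and expanding, every monomial
is a product of anticommuting degree-one classes; the terms containing a square `a_1 a_1` or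
`b_1 b_1` vanish and the remaining ones match after reordering with the Koszul signs. -/

section Anticommuting

variable {R : Type*} [Ring R]

theorem mul_left_anticomm {x y : R} (h : x * y = -(y * x)) (z : R) :
    x * (y * z) = -(y * (x * z)) := by
  rw [← mul_assoc, h, neg_mul, mul_assoc]

theorem mul_mul_eq_zero_of_mul_self_eq_zero {x : R} (h : x * x = 0) (z : R) :
    x * (x * z) = 0 := by
  rw [← mul_assoc, h, zero_mul]

-- `a, b, u, v, w` play the roles of `a_1, b_1, a_i, a_j, b_j`.
theorem anticomm_identity_a {a b u v w : R} (haa : a * a = 0)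
    (hau : a * u = -(u * a)) (hav : a * v = -(v * a)) (hab : a * b = -(b * a))
    (hbu : b * u = -(u * b)) (hbv : b * v = -(v * b)) (hvu : v * u = -(u * v)) :
    a * (v - a) * ((u - a) * (w - b)) =
      -(a * (u - a) * (v * w)) + a * b * ((u - a) * (v - a)) := by
  simp only [mul_sub, sub_mul, mul_assoc, mul_neg, neg_mul, neg_neg, mul_zero, zero_mul, haa,
    hau, hav, hab, mul_left_anticomm hau, mul_left_anticomm hav, mul_left_anticomm hab,
    mul_left_anticomm hbu, mul_left_anticomm hbv, mul_left_anticomm hvu,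
    mul_mul_eq_zero_of_mul_self_eq_zero haa]
  abel

theorem anticomm_identity_b {a b u v w : R} (hbb : b * b = 0)
    (hav : a * v = -(v * a)) (hab : a * b = -(b * a)) (hbu : b * u = -(u * b))
    (hbv : b * v = -(v * b)) (hvu : v * u = -(u * v)) :
    b * (v - a) * ((u - a) * (w - b)) =
      -(b * (u - a) * (v * w)) + a * b * ((u - a) * (w - b)) := by
  simp only [mul_sub, sub_mul, mul_assoc, mul_neg, neg_mul, neg_neg, mul_zero, hbb, hab, hbu,
    hbv, mul_left_anticomm hav, mul_left_anticomm hab, mul_left_anticomm hbu,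
    mul_left_anticomm hbv, mul_left_anticomm hvu, mul_mul_eq_zero_of_mul_self_eq_zero hbb]
  abel

end Anticommuting

section SurfCoh

variable {n g : ℕ}

theorem gA_mul_gA_same (i : Fin n) (p q : Fin g) : gA i p * gA i q = (0 : SurfCoh n g) := by
  have h := RingQuot.mkAlgHom_rel ℚ (SurfRel.aa i p q)
  rwa [map_mul, map_zero] at h

theorem gB_mul_gB_same (i : Fin n) (p q : Fin g) : gB i p * gB i q = (0 : SurfCoh n g) := by
  have h := RingQuot.mkAlgHom_rel ℚ (SurfRel.bb i p q)
  rwa [map_mul, map_zero] at h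

theorem gA_mul_gB_self (i : Fin n) (p : Fin g) : gA i p * gB i p = (gW i : SurfCoh n g) := by
  have h := RingQuot.mkAlgHom_rel ℚ (SurfRel.ab_eq i p)
  rwa [map_mul] at h

theorem mkAlgHom_ι_anticomm {u v : SurfGen n g} (hu : u.deg = 1) (hv : v.deg = 1) :
    RingQuot.mkAlgHom ℚ (SurfRel n g) (FreeAlgebra.ι ℚ u) *
        RingQuot.mkAlgHom ℚ (SurfRel n g) (FreeAlgebra.ι ℚ v) =
      -(RingQuot.mkAlgHom ℚ (SurfRel n g) (FreeAlgebra.ι ℚ v) *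
          RingQuot.mkAlgHom ℚ (SurfRel n g) (FreeAlgebra.ι ℚ u)) := by
  simpa only [hu, hv, mul_one, pow_one, neg_smul, one_smul, map_neg, map_mul] using
    RingQuot.mkAlgHom_rel ℚ (SurfRel.koszul u v)

variable [NeZero n] [NeZero g]

theorem gX_zero_zero : (gX 0 0 : SurfCoh n g) = gA 0 0 := by simp [gX]

theorem gY_zero_zero : (gY 0 0 : SurfCoh n g) = gB 0 0 := by simp [gY]

theorem gX_zero_of_ne_zero {i : Fin n} (hi : i ≠ 0) :
    (gX i 0 : SurfCoh n g) = gA i 0 - gA 0 0 := by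
  simp [gX, hi]

theorem gY_zero_of_ne_zero {i : Fin n} (hi : i ≠ 0) :
    (gY i 0 : SurfCoh n g) = gB i 0 - gB 0 0 := by
  simp [gY, hi]

theorem identities_in_surfCoh {i j : Fin n} (hi : i ≠ 0) (hj : j ≠ 0) :
    (gX 0 0 : SurfCoh n g) * gX j 0 * (gX i 0 * gY j 0) =
        -(gX 0 0 * gX i 0 * gW j) + gW 0 * (gX i 0 * gX j 0) ∧
      (gY 0 0 : SurfCoh n g) * gX j 0 * (gX i 0 * gY j 0) =
        -(gY 0 0 * gX i 0 * gW j) + gW 0 * (gX i 0 * gY j 0) := by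
  rw [gX_zero_zero, gY_zero_zero, gX_zero_of_ne_zero hi, gX_zero_of_ne_zero hj,
    gY_zero_of_ne_zero hj, ← gA_mul_gB_self 0 0, ← gA_mul_gB_self j 0]
  have hab : gA 0 0 * gB 0 0 = -(gB 0 0 * gA 0 0 : SurfCoh n g) := mkAlgHom_ι_anticomm rfl rfl
  have hau : gA 0 0 * gA i 0 = -(gA i 0 * gA 0 0 : SurfCoh n g) := mkAlgHom_ι_anticomm rfl rfl
  have hav : gA 0 0 * gA j 0 = -(gA j 0 * gA 0 0 : SurfCoh n g) := mkAlgHom_ι_anticomm rfl rfl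
  have hbu : gB 0 0 * gA i 0 = -(gA i 0 * gB 0 0 : SurfCoh n g) := mkAlgHom_ι_anticomm rfl rfl
  have hbv : gB 0 0 * gA j 0 = -(gA j 0 * gB 0 0 : SurfCoh n g) := mkAlgHom_ι_anticomm rfl rfl
  have hvu : gA j 0 * gA i 0 = -(gA i 0 * gA j 0 : SurfCoh n g) := mkAlgHom_ι_anticomm rfl rfl
  exact ⟨anticomm_identity_a (gA_mul_gA_same 0 0 0) hau hav hab hbu hbv hvu,
    anticomm_identity_b (gB_mul_gB_same 0 0 0) hav hab hbu hbv hvu⟩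

end SurfCoh

theorem stmt11_general (n g : ℕ) [NeZero n] [NeZero g]
    (i j : Fin n) (hi : i ≠ 0) (hj : j ≠ 0) :
    xA 0 * xA j * (xA i * yA j) = (-(xA 0 * xA i * wA j) + wA 0 * (xA i * xA j) : SurfA n g) ∧
      yA 0 * xA j * (xA i * yA j) =
        (-(yA 0 * xA i * wA j) + wA 0 * (xA i * yA j) : SurfA n g) := by
  obtain ⟨hx, hy⟩ := identities_in_surfCoh (n := n) (g := g) hi hj
  constructor
  · simpa only [xA, yA, wA, map_mul, map_add, map_neg] using congrArg (toA n g) hx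
  · simpa only [xA, yA, wA, map_mul, map_add, map_neg] using congrArg (toA n g) hy

/-- In `A_g` (`g ≥ 2`, `n ≥ 3`), for distinct `i, j ∈ {2,…,n}`:
`x_1 x_j (x_i y_j) = -x_1 x_i ω_j + ω_1 x_i x_j` and
`y_1 x_j (x_i y_j) = -y_1 x_i ω_j + ω_1 x_i y_j`. -/
theorem stmt11 (n g : ℕ) [NeZero n] [NeZero g] (hn : 3 ≤ n) (hg : 2 ≤ g)
    (i j : Fin n) (hi : i ≠ 0) (hj : j ≠ 0) (hij : i ≠ j) :
    xA 0 * xA j * (xA i * yA j) = (-(xA 0 * xA i * wA j) + wA 0 * (xA i * xA j) : SurfA n g) ∧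
      yA 0 * xA j * (xA i * yA j) =
        (-(yA 0 * xA i * wA j) + wA 0 * (xA i * yA j) : SurfA n g) :=
  stmt11_general n g i j hi hj
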